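/- Let z_k be the k-th iterate of the randomized Kaczmarz method applied to A^T z = 0 with initial guess z_0, where at each step a column j is chosen independently with probability ||A_{(j)}||^2/||A||_F^2. If A^T A v_ℓ = σ_ℓ^2 v_ℓ and A^T w = 0, then E[⟨z_k - w, A v_ℓ⟩] = (1 - σ_ℓ^2/||A||_F^2)^k ⟨z_0 - w, A v_ℓ⟩. -/

import Mathlib

open Matrix BigOperators Finset

noncomputable def frob2 {m n : ℕ} (A : Matrix (Fin m) (Fin n) ℝ) : ℝ :=
  ∑ i, ∑ j, (A i j) ^ 2

noncomputable def colNorm2 {m n : ℕ} (A : Matrix (Fin m) (Fin n) ℝ) (j : Fin n) : ℝ :=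
  ∑ i, (A i j) ^ 2

noncomputable def colStep {m n : ℕ} (A : Matrix (Fin m) (Fin n) ℝ) (j : Fin n)
    (z : Fin m → ℝ) : Fin m → ℝ :=
  z - ((Aᵀ j ⬝ᵥ z) / colNorm2 A j) • Aᵀ j

/-- RK iterates for `Aᵀ z = 0`: the head of the list is the column index of the
most recent step. -/
noncomputable def zIter {m n : ℕ} (A : Matrix (Fin m) (Fin n) ℝ)
    (z0 : Fin m → ℝ) : List (Fin n) → Fin m → ℝ
  | [] => z0
  | j :: l => colStep A j (zIter A z0 l)

/-! Averaged over the column, one step of the method multiplies `⟨z - w, A v⟩` by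
`1 - σ²/‖A‖_F²`: since `Aᵀ w = 0` the step commutes with subtracting `w`, and the weights
`‖A_{(j)}‖²` cancel the normalisation of the projections, leaving
`‖A‖_F² ⟨z, A v⟩ - ⟨Aᵀ z, Aᵀ A v⟩ = (‖A‖_F² - σ²) ⟨z, A v⟩`. As the columns are drawn
independently, `k` steps give the `k`-th power. -/

theorem sum_prod_mul_ofFn_eq_pow {ι R : Type*} [Fintype ι] [CommSemiring R]
    (p : ι → R) (g : List ι → R) (c : R) (hg : ∀ l, ∑ j, p j * g (j :: l) = c * g l) (k : ℕ) :
    ∑ ω : Fin k → ι, (∏ t, p (ω t)) * g (List.ofFn ω) = c ^ k * g [] := by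
  induction k with
  | zero => simp
  | succ k ih =>
    rw [← (Fin.consEquiv fun _ : Fin (k + 1) => ι).sum_comp, Fintype.sum_prod_type, sum_comm]
    calc ∑ ω : Fin k → ι, ∑ j, (∏ t, p (Fin.cons j ω t : ι)) * g (List.ofFn (Fin.cons j ω))
        = ∑ ω : Fin k → ι, (∏ t, p (ω t)) * ∑ j, p j * g (j :: List.ofFn ω) := by
          simp only [Fin.prod_univ_succ, Fin.cons_zero, Fin.cons_succ, List.ofFn_cons, mul_sum]
          exact sum_congr rfl fun _ _ => sum_congr rfl fun _ _ => by ring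
      _ = c ^ (k + 1) * g [] := by
          simp only [hg, mul_left_comm _ c, ← mul_sum, ih, pow_succ', mul_assoc]

theorem colNorm2_eq_dotProduct {m n : ℕ} (A : Matrix (Fin m) (Fin n) ℝ) (j : Fin n) :
    colNorm2 A j = Aᵀ j ⬝ᵥ Aᵀ j := by
  simp [colNorm2, dotProduct, sq]

theorem sum_colNorm2 {m n : ℕ} (A : Matrix (Fin m) (Fin n) ℝ) : ∑ j, colNorm2 A j = frob2 A :=
  sum_comm

theorem frob2_ne_zero {m n : ℕ} {A : Matrix (Fin m) (Fin n) ℝ} (hA : A ≠ 0) : frob2 A ≠ 0 := by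
  rw [← sum_colNorm2]
  simp_rw [colNorm2_eq_dotProduct]
  intro h
  have hcol := (sum_eq_zero_iff_of_nonneg fun j _ => dotProduct_self_star_nonneg (Aᵀ j)).1 h
  exact hA (transpose_eq_zero.1 (funext fun j => dotProduct_self_eq_zero.1 (hcol j (mem_univ j))))

theorem colStep_sub {m n : ℕ} {A : Matrix (Fin m) (Fin n) ℝ} {w : Fin m → ℝ}
    (hw : Aᵀ *ᵥ w = 0) (j : Fin n) (z : Fin m → ℝ) :
    colStep A j z - w = colStep A j (z - w) := by
  have hjw : Aᵀ j ⬝ᵥ w = 0 := congrFun hw j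
  simp only [colStep, dotProduct_sub, hjw, sub_zero]
  abel

theorem colNorm2_mul_colStep_dotProduct {m n : ℕ} (A : Matrix (Fin m) (Fin n) ℝ) (j : Fin n)
    (z u : Fin m → ℝ) :
    colNorm2 A j * (colStep A j z ⬝ᵥ u)
      = colNorm2 A j * (z ⬝ᵥ u) - (Aᵀ j ⬝ᵥ z) * (Aᵀ j ⬝ᵥ u) := by
  rw [colStep, sub_dotProduct, smul_dotProduct, smul_eq_mul, colNorm2_eq_dotProduct]
  by_cases hj : Aᵀ j = 0
  · simp [hj]
  · field_simp [dotProduct_self_eq_zero.not.2 hj]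

theorem sum_colNorm2_mul_colStep_dotProduct {m n : ℕ} (A : Matrix (Fin m) (Fin n) ℝ)
    (z u : Fin m → ℝ) :
    ∑ j, colNorm2 A j * (colStep A j z ⬝ᵥ u) = frob2 A * (z ⬝ᵥ u) - (Aᵀ *ᵥ z) ⬝ᵥ (Aᵀ *ᵥ u) := by
  simp only [colNorm2_mul_colStep_dotProduct, sum_sub_distrib, ← sum_mul, sum_colNorm2]
  rfl

theorem sum_colNorm2_div_mul_colStep_sub_dotProduct {m n : ℕ} {A : Matrix (Fin m) (Fin n) ℝ}
    (hA : A ≠ 0) {μ : ℝ} {v : Fin n → ℝ} (hv : Aᵀ *ᵥ (A *ᵥ v) = μ • v) {w : Fin m → ℝ}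
    (hw : Aᵀ *ᵥ w = 0) (z : Fin m → ℝ) :
    ∑ j, colNorm2 A j / frob2 A * ((colStep A j z - w) ⬝ᵥ (A *ᵥ v))
      = (1 - μ / frob2 A) * ((z - w) ⬝ᵥ (A *ᵥ v)) := by
  have hAv : (Aᵀ *ᵥ (z - w)) ⬝ᵥ (Aᵀ *ᵥ (A *ᵥ v)) = μ * ((z - w) ⬝ᵥ (A *ᵥ v)) := by
    rw [hv, dotProduct_smul, smul_eq_mul, mulVec_transpose, ← dotProduct_mulVec]
  simp only [colStep_sub hw, div_mul_eq_mul_div, ← sum_div,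
    sum_colNorm2_mul_colStep_dotProduct, hAv]
  field_simp [frob2_ne_zero hA]

theorem rek_z_iter_expectation_general {m n : ℕ}
    (A : Matrix (Fin m) (Fin n) ℝ) (hA : A ≠ 0)
    (σ : ℝ) (v : Fin n → ℝ)
    (hv : Aᵀ *ᵥ (A *ᵥ v) = σ ^ 2 • v)
    (w : Fin m → ℝ) (hw : Aᵀ *ᵥ w = 0)
    (z0 : Fin m → ℝ) (k : ℕ) :
    ∑ ω : Fin k → Fin n,
        (∏ t, colNorm2 A (ω t) / frob2 A)
          * ((zIter A z0 (List.ofFn ω) - w) ⬝ᵥ (A *ᵥ v))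
      = (1 - σ ^ 2 / frob2 A) ^ k * ((z0 - w) ⬝ᵥ (A *ᵥ v)) :=
  sum_prod_mul_ofFn_eq_pow _ (fun l => (zIter A z0 l - w) ⬝ᵥ (A *ᵥ v)) _
    (fun l => sum_colNorm2_div_mul_colStep_sub_dotProduct hA hv hw (zIter A z0 l)) k

/-- for the RK method on `Aᵀ z = 0` with columns sampled i.i.d. with
probability `‖A_{(j)}‖²/‖A‖_F²`, if `Aᵀ A vℓ = σℓ² vℓ` and `Aᵀ w = 0`, then
`E[⟨z_k - w, A vℓ⟩] = (1 - σℓ²/‖A‖_F²)^k ⟨z_0 - w, A vℓ⟩`. -/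
theorem rek_z_iter_expectation {m n : ℕ}
    (A : Matrix (Fin m) (Fin n) ℝ) (hA : A ≠ 0)
    (σ : ℝ) (hσ : 0 ≤ σ) (v : Fin n → ℝ)
    (hv : Aᵀ *ᵥ (A *ᵥ v) = σ ^ 2 • v)
    (w : Fin m → ℝ) (hw : Aᵀ *ᵥ w = 0)
    (z0 : Fin m → ℝ) (k : ℕ) :
    ∑ ω : Fin k → Fin n,
        (∏ t, colNorm2 A (ω t) / frob2 A)
          * ((zIter A z0 (List.ofFn ω) - w) ⬝ᵥ (A *ᵥ v))
      = (1 - σ ^ 2 / frob2 A) ^ k * ((z0 - w) ⬝ᵥ (A *ᵥ v)) :=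
  rek_z_iter_expectation_general A hA σ v hv w hw z0 k
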